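/- arXiv:1903.09218 — 4 statements merged into one kernel-verified Lean document; each statement's English description precedes it below -/
import Mathlib

section
/- (Variant ξ of the Casimir element.) As ℝ-linear endomorphisms of ℝ[x₁,x₂,x₃], one has the operator identity D₀∘D₁∘D₂ + D₁∘D₂∘D₀ + D₂∘D₀∘D₁ − D₀∘D₂∘D₁ − D₁∘D₀∘D₂ − D₂∘D₁∘D₀ = D₀∘D₀ + D₁∘D₁ + D₂∘D₂. -/
open MvPolynomial

/-- Directional derivative along `f₀ = (x₂, −x₁, 0)`. -/
noncomputable def D0 : Module.End ℝ (MvPolynomial (Fin 3) ℝ) :=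
  (LinearMap.mulLeft ℝ (X 1 : MvPolynomial (Fin 3) ℝ)).comp (pderiv 0).toLinearMap
    - (LinearMap.mulLeft ℝ (X 0 : MvPolynomial (Fin 3) ℝ)).comp (pderiv 1).toLinearMap

/-- Directional derivative along `f₁ = (x₃, 0, −x₁)`. -/
noncomputable def D1 : Module.End ℝ (MvPolynomial (Fin 3) ℝ) :=
  (LinearMap.mulLeft ℝ (X 2 : MvPolynomial (Fin 3) ℝ)).comp (pderiv 0).toLinearMap
    - (LinearMap.mulLeft ℝ (X 0 : MvPolynomial (Fin 3) ℝ)).comp (pderiv 2).toLinearMap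

/-- Directional derivative along `f₂ = (0, x₃, −x₂)`. -/
noncomputable def D2 : Module.End ℝ (MvPolynomial (Fin 3) ℝ) :=
  (LinearMap.mulLeft ℝ (X 2 : MvPolynomial (Fin 3) ℝ)).comp (pderiv 1).toLinearMap
    - (LinearMap.mulLeft ℝ (X 1 : MvPolynomial (Fin 3) ℝ)).comp (pderiv 2).toLinearMap


/-! The alternating sum regroups as `D0 ⁅D1, D2⁆ + D1 ⁅D2, D0⁆ + D2 ⁅D0, D1⁆`, so the identity
follows from the `𝔰𝔬(3)` commutation relations `⁅D1, D2⁆ = D0`, `⁅D2, D0⁆ = D1`,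
`⁅D0, D1⁆ = D2`. Each `Dₖ` is a derivation, and so is the commutator of two derivations; hence
these relations need only be checked on the coordinate functions. -/

namespace MvPolynomial

variable {R σ : Type*} [CommRing R]

variable (R) in
/-- The derivation `xⱼ ∂ᵢ − xᵢ ∂ⱼ` along the infinitesimal rotation of the `(i, j)`-plane. -/
noncomputable def rotationDeriv (i j : σ) : Derivation R (MvPolynomial σ R) (MvPolynomial σ R) :=
  (X j : MvPolynomial σ R) • pderiv i - (X i : MvPolynomial σ R) • pderiv j

theorem rotationDeriv_apply (i j : σ) (p : MvPolynomial σ R) :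
    rotationDeriv R i j p = X j * pderiv i p - X i * pderiv j p := by
  simp [rotationDeriv]

theorem rotationDeriv_commutation_relations [DecidableEq σ] {i j k : σ} (hij : i ≠ j)
    (hjk : j ≠ k) (hki : k ≠ i) :
    ⁅rotationDeriv R i k, rotationDeriv R j k⁆ = rotationDeriv R i j ∧
      ⁅rotationDeriv R j k, rotationDeriv R i j⁆ = rotationDeriv R i k ∧
      ⁅rotationDeriv R i j, rotationDeriv R i k⁆ = rotationDeriv R j k := by
  refine ⟨?_, ?_, ?_⟩ <;> refine derivation_ext fun l => ?_ <;>
  · simp only [Derivation.commutator_apply, rotationDeriv_apply, pderiv_X, Pi.single_apply,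
      map_sub, Derivation.leibniz, smul_eq_mul]
    by_cases hli : l = i <;> by_cases hlj : l = j <;> by_cases hlk : l = k <;> subst_vars <;>
      simp_all [eq_comm]

end MvPolynomial

theorem alternating_triple_product_eq_sum_mul_self {A : Type*} [Ring A] {a b c : A}
    (hbc : ⁅b, c⁆ = a) (hca : ⁅c, a⁆ = b) (hab : ⁅a, b⁆ = c) :
    a * (b * c) + b * (c * a) + c * (a * b) - a * (c * b) - b * (a * c) - c * (b * a) =
      a * a + b * b + c * c := by
  calc _ = a * ⁅b, c⁆ + b * ⁅c, a⁆ + c * ⁅a, b⁆ := by simp only [Ring.lie_def]; noncomm_ring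
    _ = a * a + b * b + c * c := by rw [hbc, hca, hab]

theorem D0_eq_rotationDeriv : D0 = (rotationDeriv ℝ (0 : Fin 3) 1).toLinearMap :=
  LinearMap.ext fun p => (rotationDeriv_apply _ _ p).symm

theorem D1_eq_rotationDeriv : D1 = (rotationDeriv ℝ (0 : Fin 3) 2).toLinearMap :=
  LinearMap.ext fun p => (rotationDeriv_apply _ _ p).symm

theorem D2_eq_rotationDeriv : D2 = (rotationDeriv ℝ (1 : Fin 3) 2).toLinearMap :=
  LinearMap.ext fun p => (rotationDeriv_apply _ _ p).symm

/-- The variant `ξ` of the Casimir element agrees with the Casimir operator. -/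
theorem xi_equals_casimir :
    D0 ∘ₗ D1 ∘ₗ D2 + D1 ∘ₗ D2 ∘ₗ D0 + D2 ∘ₗ D0 ∘ₗ D1
      - D0 ∘ₗ D2 ∘ₗ D1 - D1 ∘ₗ D0 ∘ₗ D2 - D2 ∘ₗ D1 ∘ₗ D0
      = D0 ∘ₗ D0 + D1 ∘ₗ D1 + D2 ∘ₗ D2 := by
  obtain ⟨h₁₂, h₂₀, h₀₁⟩ :=
    rotationDeriv_commutation_relations (R := ℝ) (i := (0 : Fin 3)) (j := 1) (k := 2)
      (by decide) (by decide) (by decide)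
  simp only [← Module.End.mul_eq_comp]
  rw [D0_eq_rotationDeriv, D1_eq_rotationDeriv, D2_eq_rotationDeriv]
  exact alternating_triple_product_eq_sum_mul_self (congrArg Derivation.toLinearMap h₁₂)
    (congrArg Derivation.toLinearMap h₂₀) (congrArg Derivation.toLinearMap h₀₁)
end

section
/- (Variant ζ of the Casimir element.) As ℝ-linear endomorphisms of ℝ[x₁,x₂,x₃], one has the operator identity 3·(D₁∘D₂∘D₁∘D₂ + D₂∘D₁∘D₂∘D₁) − 2·(D₁∘D₂∘D₂∘D₁ + D₂∘D₁∘D₁∘D₂) − (D₁∘D₁∘D₂∘D₂ + D₂∘D₂∘D₁∘D₁) = D₀∘D₀ + D₁∘D₁ + D₂∘D₂. -/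
open MvPolynomial

lemma pderiv_swap (i j : Fin 3) (p : MvPolynomial (Fin 3) ℝ) :
    pderiv i (pderiv j p) = pderiv j (pderiv i p) := by
  induction p using MvPolynomial.induction_on with
  | C a => simp
  | add p q hp hq => simp [hp, hq]
  | mul_X p k hp =>
    simp [pderiv_mul, hp, Pi.single_apply]
    split_ifs <;> (try simp only [map_zero]) <;> ring

lemma swap01 (p : MvPolynomial (Fin 3) ℝ) :
    pderiv 0 (pderiv 1 p) = pderiv 1 (pderiv 0 p) := pderiv_swap 0 1 p
lemma swap02 (p : MvPolynomial (Fin 3) ℝ) :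
    pderiv 0 (pderiv 2 p) = pderiv 2 (pderiv 0 p) := pderiv_swap 0 2 p
lemma swap12 (p : MvPolynomial (Fin 3) ℝ) :
    pderiv 1 (pderiv 2 p) = pderiv 2 (pderiv 1 p) := pderiv_swap 1 2 p

set_option maxHeartbeats 4000000 in
/-- The variant `ζ` of the Casimir element agrees with the Casimir operator. -/
theorem zeta_equals_casimir :
    (3 : ℝ) • (D1 ∘ₗ D2 ∘ₗ D1 ∘ₗ D2 + D2 ∘ₗ D1 ∘ₗ D2 ∘ₗ D1)
      - (2 : ℝ) • (D1 ∘ₗ D2 ∘ₗ D2 ∘ₗ D1 + D2 ∘ₗ D1 ∘ₗ D1 ∘ₗ D2)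
      - (D1 ∘ₗ D1 ∘ₗ D2 ∘ₗ D2 + D2 ∘ₗ D2 ∘ₗ D1 ∘ₗ D1)
      = D0 ∘ₗ D0 + D1 ∘ₗ D1 + D2 ∘ₗ D2 := by
  apply LinearMap.ext
  intro p
  simp only [D0, D1, D2, LinearMap.sub_apply, LinearMap.add_apply, LinearMap.smul_apply,
    LinearMap.comp_apply, LinearMap.mulLeft_apply, Derivation.coeFn_coe,
    map_sub, map_add, pderiv_mul, pderiv_X_self,
    pderiv_X_of_ne (by decide : (0:Fin 3) ≠ 1), pderiv_X_of_ne (by decide : (0:Fin 3) ≠ 2),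
    pderiv_X_of_ne (by decide : (1:Fin 3) ≠ 0), pderiv_X_of_ne (by decide : (1:Fin 3) ≠ 2),
    pderiv_X_of_ne (by decide : (2:Fin 3) ≠ 0), pderiv_X_of_ne (by decide : (2:Fin 3) ≠ 1),
    swap01, swap02, swap12, smul_eq_mul, MvPolynomial.smul_eq_C_mul, map_ofNat,
    one_mul, mul_one, zero_mul, mul_zero, add_zero, zero_add, sub_zero, zero_sub]
  ring
end

section
/- (Density of the algebra generated by mξ and mζ.) Let a₁ < b₁ and 0 < a₂ < b₂ be real numbers and Σ = [a₁,b₁] × [a₂,b₂] ⊆ ℝ² (a compact topological space). Then the non-unital subalgebra of the space C(Σ, ℝ) of continuous real-valued functions on Σ generated by the two functions σ ↦ mξ(σ) and σ ↦ mζ(σ) is dense in C(Σ, ℝ) with respect to the uniform (sup-norm) topology. -/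
/-!
If `g` is a strictly positive element of a non-unital subalgebra `S` of `C(X, ℝ)`, `X` compact,
then `u = 1 - c • g` has norm `< 1` for small `c > 0`, and `1 - uⁿ ∈ S` tends to `1`. So the
closure of `S` is a closed unital subalgebra, and if `S` separates points it is everything by
Stone–Weierstrass. On `Σ` the function `mζ = σ₂⁴` is positive since `a₂ > 0`, and `mξ`, `mζ`
separate points because `σ₂ ↦ σ₂⁴` is injective on `σ₂ > 0`.
-/

/-- The monomial `mξ(σ) = σ₁·σ₂²`. -/
def mXi (σ : ℝ × ℝ) : ℝ := σ.1 * σ.2 ^ 2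

/-- The monomial `mζ(σ) = σ₂⁴`. -/
def mZeta (σ : ℝ × ℝ) : ℝ := σ.2 ^ 4

theorem mXi_continuous : Continuous mXi := by
  unfold mXi; fun_prop

theorem mZeta_continuous : Continuous mZeta := by
  unfold mZeta; fun_prop

open Filter Topology

theorem one_sub_pow_mem {A S : Type*} [Ring A] [SetLike S A] [NonUnitalSubringClass S A]
    {s : S} {u : A} (h : 1 - u ∈ s) : ∀ n : ℕ, 1 - u ^ n ∈ s
  | 0 => by simp
  | n + 1 => by
    have hn := one_sub_pow_mem h n
    have : 1 - u ^ (n + 1) = (1 - u ^ n) + (1 - u) - (1 - u ^ n) * (1 - u) := by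
      rw [pow_succ]; noncomm_ring
    rw [this]
    exact sub_mem (add_mem hn h) (mul_mem hn h)

namespace ContinuousMap

variable {X : Type*} [TopologicalSpace X] [CompactSpace X]

theorem one_mem_topologicalClosure_of_forall_pos (S : NonUnitalSubalgebra ℝ C(X, ℝ))
    {g : C(X, ℝ)} (hgS : g ∈ S) (hg : ∀ x, 0 < g x) : (1 : C(X, ℝ)) ∈ S.topologicalClosure := by
  set c : ℝ := (‖g‖ + 1)⁻¹
  set u : C(X, ℝ) := 1 - c • g
  have hc : 0 < c := by positivity
  have hu : ‖u‖ < 1 := by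
    refine (norm_lt_iff _ one_pos).2 fun x => ?_
    have hgx : g x < ‖g‖ + 1 := ((Real.le_norm_self _).trans (norm_coe_le_norm g x)).trans_lt
      (lt_add_one _)
    have hcgx : c * g x < 1 := by rwa [inv_mul_lt_one₀ (by positivity)]
    have : 0 < c * g x := mul_pos hc (hg x)
    simp only [u, sub_apply, one_apply, smul_apply, smul_eq_mul, Real.norm_eq_abs]
    rw [abs_lt]; constructor <;> linarith
  have hlim : Tendsto (fun n : ℕ => 1 - u ^ n) atTop (𝓝 1) := by
    simpa using (tendsto_pow_atTop_nhds_zero_of_norm_lt_one hu).const_sub (1 : C(X, ℝ))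
  have hmem : 1 - u ∈ S := by
    rw [sub_sub_cancel]; exact SMulMemClass.smul_mem c hgS
  exact mem_closure_of_tendsto hlim (Eventually.of_forall (one_sub_pow_mem hmem))

theorem nonUnitalSubalgebra_dense_of_separatesPoints_of_forall_pos
    (S : NonUnitalSubalgebra ℝ C(X, ℝ))
    (hsep : Set.SeparatesPoints ((⇑) '' (S : Set C(X, ℝ))))
    {g : C(X, ℝ)} (hgS : g ∈ S) (hg : ∀ x, 0 < g x) : Dense (S : Set C(X, ℝ)) := by
  let T := S.topologicalClosure.toSubalgebra (one_mem_topologicalClosure_of_forall_pos S hgS hg)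
  have hTsep : T.SeparatesPoints :=
    Set.separatesPoints_mono (Set.image_mono S.le_topologicalClosure) hsep
  have hT : ⊤ ≤ T := (subalgebra_topologicalClosure_eq_top_of_separatesPoints T hTsep).ge.trans
    (Subalgebra.topologicalClosure_minimal le_rfl S.isClosed_topologicalClosure)
  exact fun f => hT Algebra.mem_top

end ContinuousMap

theorem mXi_mZeta_injOn : Set.InjOn (fun σ => (mXi σ, mZeta σ)) {σ : ℝ × ℝ | 0 < σ.2} := by
  intro σ hσ τ hτ h
  simp only [Prod.mk.injEq, mXi, mZeta] at h
  obtain ⟨h₁, h₂⟩ := h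
  have h₂' : σ.2 = τ.2 := (pow_left_inj₀ hσ.out.le hτ.out.le four_ne_zero).1 h₂
  rw [h₂'] at h₁
  exact Prod.ext (mul_right_cancel₀ (pow_ne_zero 2 (ne_of_gt hτ.out)) h₁) h₂'

theorem adjoin_mXi_mZeta_dense_general (a₁ b₁ a₂ b₂ : ℝ) (ha₂ : 0 < a₂) :
    Dense ((NonUnitalAlgebra.adjoin ℝ
        ({⟨fun σ => mXi σ.1, mXi_continuous.comp continuous_subtype_val⟩,
          ⟨fun σ => mZeta σ.1, mZeta_continuous.comp continuous_subtype_val⟩} :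
        Set C(↥(Set.Icc a₁ b₁ ×ˢ Set.Icc a₂ b₂), ℝ))) :
      Set C(↥(Set.Icc a₁ b₁ ×ˢ Set.Icc a₂ b₂), ℝ)) := by
  have : CompactSpace ↥(Set.Icc a₁ b₁ ×ˢ Set.Icc a₂ b₂) :=
    isCompact_iff_compactSpace.mp (isCompact_Icc.prod isCompact_Icc)
  have hpos : ∀ σ : ↥(Set.Icc a₁ b₁ ×ˢ Set.Icc a₂ b₂), 0 < σ.1.2 :=
    fun σ => ha₂.trans_le σ.2.2.1
  refine ContinuousMap.nonUnitalSubalgebra_dense_of_separatesPoints_of_forall_pos _ ?_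
    (NonUnitalAlgebra.subset_adjoin ℝ (Set.mem_insert_of_mem _ rfl)) fun σ => pow_pos (hpos σ) 4
  intro σ τ hne
  by_contra! h
  refine hne (Subtype.ext (mXi_mZeta_injOn (hpos σ) (hpos τ) (Prod.ext ?_ ?_)))
  · exact h _ ⟨_, NonUnitalAlgebra.subset_adjoin ℝ (Set.mem_insert _ _), rfl⟩
  · exact h _ ⟨_, NonUnitalAlgebra.subset_adjoin ℝ (Set.mem_insert_of_mem _ rfl), rfl⟩

/-- The (non-unital) algebra of functions generated by `mξ` and `mζ` is dense in
`C(Σ, ℝ)` for `Σ = [a₁,b₁] × [a₂,b₂]` with `a₁ < b₁` and `0 < a₂ < b₂`. -/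
theorem adjoin_mXi_mZeta_dense (a₁ b₁ a₂ b₂ : ℝ) (hab₁ : a₁ < b₁)
    (ha₂ : 0 < a₂) (hab₂ : a₂ < b₂) :
    Dense ((NonUnitalAlgebra.adjoin ℝ
        ({⟨fun σ => mXi σ.1, mXi_continuous.comp continuous_subtype_val⟩,
          ⟨fun σ => mZeta σ.1, mZeta_continuous.comp continuous_subtype_val⟩} :
        Set C(↥(Set.Icc a₁ b₁ ×ˢ Set.Icc a₂ b₂), ℝ))) :
      Set C(↥(Set.Icc a₁ b₁ ×ˢ Set.Icc a₂ b₂), ℝ)) :=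
  adjoin_mXi_mZeta_dense_general a₁ b₁ a₂ b₂ ha₂
end

section
/- (Vanishing of moments against mξ and mζ implies vanishing.) Let a₁ < b₁ and 0 < a₂ < b₂ be real numbers and Σ = [a₁,b₁] × [a₂,b₂] ⊆ ℝ², and let ψ : ℝ² → ℝ be continuous. If for all natural numbers a, b with a + b ≥ 1 one has ∫_Σ σ₁^a · σ₂^(2a+4b) · ψ(σ) dσ = 0, where the integral is with respect to two-dimensional Lebesgue measure restricted to Σ, then ψ(σ) = 0 for every σ ∈ Σ. -/
/-!
Put `G := mζ · ψ`. The hypothesis says that `G` is orthogonal in `L²(Σ)` to every monomial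
`mξ^a mζ^b`, hence to the algebra they generate. Since `σ ↦ (mξ σ, mζ σ)` is injective where
`σ₂ > 0`, that algebra separates the points of the compact set `Σ`, so by Stone–Weierstrass it is
dense in `C(Σ)`. As `f ↦ ∫_Σ f G` is continuous for the sup norm, `G` is orthogonal to itself:
`∫_Σ G² = 0`. A continuous function with this property vanishes on `Σ`, which is the closure of its
interior, and `mζ > 0` there gives `ψ = 0`.
-/

open MeasureTheory

theorem Algebra.adjoin_pair_le_ker {R S M : Type*} [CommSemiring R] [CommSemiring S] [Algebra R S]
    [AddCommMonoid M] [Module R M] (φ : S →ₗ[R] M) {u v : S}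
    (h : ∀ a b : ℕ, φ (u ^ a * v ^ b) = 0) :
    Subalgebra.toSubmodule (Algebra.adjoin R {u, v}) ≤ LinearMap.ker φ := by
  rw [Algebra.adjoin_eq_span, Submodule.span_le]
  rintro _ hw
  obtain ⟨a, b, rfl⟩ := (Submonoid.mem_closure_pair u v _).mp hw
  exact h a b

theorem ContinuousLinearMap.eq_zero_of_separatesPoints {X M : Type*} [TopologicalSpace X]
    [CompactSpace X] [TopologicalSpace M] [AddCommMonoid M] [Module ℝ M] [T2Space M]
    (φ : C(X, ℝ) →L[ℝ] M) {A : Subalgebra ℝ C(X, ℝ)} (hA : A.SeparatesPoints)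
    (h : ∀ f ∈ A, φ f = 0) : φ = 0 := by
  have hdense : Dense (A : Set C(X, ℝ)) := by
    rw [dense_iff_closure_eq, ← Subalgebra.topologicalClosure_coe,
      ContinuousMap.subalgebra_topologicalClosure_eq_top_of_separatesPoints A hA,
      Algebra.coe_top]
  exact ContinuousLinearMap.ext_on (hdense.mono Submodule.subset_span) h

namespace ContinuousMap

variable {X : Type*} [TopologicalSpace X] [CompactSpace X] [MeasurableSpace X] [BorelSpace X]
  (μ : Measure X) [IsFiniteMeasure μ]

noncomputable def integralMulCLM (g : C(X, ℝ)) : C(X, ℝ) →L[ℝ] ℝ :=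
  L1.integralCLM ∘L toLp 1 μ ℝ ∘L (ContinuousLinearMap.mul ℝ C(X, ℝ)).flip g

theorem integralMulCLM_apply (g f : C(X, ℝ)) :
    integralMulCLM μ g f = ∫ x, f x * g x ∂μ := by
  change L1.integralCLM _ = _
  rw [← L1.integral_eq, L1.integral_eq_integral]
  exact integral_congr_ae (coeFn_toLp μ (f * g))

end ContinuousMap

theorem eqOn_zero_of_setIntegral_sq_eq_zero {X : Type*} [TopologicalSpace X] [MeasurableSpace X]
    [OpensMeasurableSpace X] [T2Space X] {μ : Measure X} [μ.IsOpenPosMeasure] [IsFiniteMeasureOnCompacts μ]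
    {s : Set X} (hs : IsCompact s) (hs_int : s ⊆ closure (interior s)) {h : X → ℝ}
    (hh : Continuous h) (h0 : ∫ x in s, h x ^ 2 ∂μ = 0) : Set.EqOn h 0 s := by
  have hint : IntegrableOn (fun x => h x ^ 2) s μ := (hh.pow 2).continuousOn.integrableOn_compact hs
  have hae : (fun x => h x ^ 2) =ᵐ[μ.restrict s] 0 :=
    (integral_eq_zero_iff_of_nonneg (fun x => sq_nonneg (h x)) hint).mp h0
  intro x hx
  exact pow_eq_zero_iff two_ne_zero |>.mp <|
    Measure.eqOn_of_ae_eq hae (hh.pow 2).continuousOn continuousOn_const hs_int hx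

theorem closure_interior_Icc_prod_Icc {α β : Type*} [TopologicalSpace α] [LinearOrder α]
    [OrderTopology α] [DenselyOrdered α] [TopologicalSpace β] [LinearOrder β] [OrderTopology β]
    [DenselyOrdered β] {a₁ b₁ : α} {a₂ b₂ : β} (h₁ : a₁ ≠ b₁) (h₂ : a₂ ≠ b₂) :
    closure (interior (Set.Icc a₁ b₁ ×ˢ Set.Icc a₂ b₂)) = Set.Icc a₁ b₁ ×ˢ Set.Icc a₂ b₂ := by
  rw [interior_prod_eq, closure_prod_eq, closure_interior_Icc h₁, closure_interior_Icc h₂]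

def mξ : C(ℝ × ℝ, ℝ) := ⟨fun σ => σ.1 * σ.2 ^ 2, by fun_prop⟩

def mζ : C(ℝ × ℝ, ℝ) := ⟨fun σ => σ.2 ^ 4, by fun_prop⟩

theorem injOn_mξ_mζ : Set.InjOn (fun σ => (mξ σ, mζ σ)) {σ : ℝ × ℝ | 0 < σ.2} := by
  rintro σ (hσ : 0 < σ.2) τ (hτ : 0 < τ.2) h
  obtain ⟨hξ, hζ⟩ := Prod.ext_iff.mp h
  have h₂ : σ.2 = τ.2 := (pow_left_inj₀ hσ.le hτ.le four_ne_zero).mp hζ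
  have h₁ : σ.1 = τ.1 := by
    refine mul_right_cancel₀ (pow_ne_zero 2 hσ.ne') ?_
    rw [show σ.1 * σ.2 ^ 2 = τ.1 * τ.2 ^ 2 from hξ, h₂]
  exact Prod.ext h₁ h₂

theorem separatesPoints_adjoin_mξ_mζ {K : Set (ℝ × ℝ)} (hK : ∀ σ ∈ K, 0 < σ.2) :
    (Algebra.adjoin ℝ {mξ.restrict K, mζ.restrict K}).SeparatesPoints := by
  intro x y hxy
  by_cases hξ : mξ x = mξ y
  · refine ⟨mζ.restrict K, ⟨_, Algebra.subset_adjoin (by simp), rfl⟩, fun hζ => hxy ?_⟩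
    exact Subtype.ext (injOn_mξ_mζ (hK x x.2) (hK y y.2) (Prod.ext hξ hζ))
  · exact ⟨mξ.restrict K, ⟨_, Algebra.subset_adjoin (by simp), rfl⟩, hξ⟩

/-- If a continuous function `ψ` on `Σ = [a₁,b₁] × [a₂,b₂]` (with `a₁ < b₁`,
`0 < a₂ < b₂`) has vanishing moments against all monomials `mξ^a·mζ^b = σ₁^a·σ₂^(2a+4b)`
with `a + b ≥ 1`, then `ψ` vanishes identically on `Σ`. -/
theorem vanishing_moments (a₁ b₁ a₂ b₂ : ℝ) (hab₁ : a₁ < b₁)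
    (ha₂ : 0 < a₂) (hab₂ : a₂ < b₂) (ψ : ℝ × ℝ → ℝ) (hψ : Continuous ψ)
    (hmom : ∀ a b : ℕ, 1 ≤ a + b →
      ∫ σ in Set.Icc a₁ b₁ ×ˢ Set.Icc a₂ b₂,
        σ.1 ^ a * σ.2 ^ (2 * a + 4 * b) * ψ σ = 0) :
    ∀ σ ∈ Set.Icc a₁ b₁ ×ˢ Set.Icc a₂ b₂, ψ σ = 0 := by
  set K := Set.Icc a₁ b₁ ×ˢ Set.Icc a₂ b₂
  have hKm : MeasurableSet K := measurableSet_Icc.prod measurableSet_Icc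
  have hKc : IsCompact K := isCompact_Icc.prod isCompact_Icc
  have hpos : ∀ σ ∈ K, 0 < σ.2 := fun σ hσ => ha₂.trans_le hσ.2.1
  have : CompactSpace K := isCompact_iff_compactSpace.mp hKc
  have := IsFiniteMeasureOnCompacts.comap' volume continuous_subtype_val
    (MeasurableEmbedding.subtype_coe hKm)
  set G : C(ℝ × ℝ, ℝ) := mζ * ⟨ψ, hψ⟩
  -- `G` carries one factor `mζ`, which turns the exponent `b` into `b + 1`
  have hmomK (a b : ℕ) : ∫ x : K, ((mξ.restrict K) ^ a * (mζ.restrict K) ^ b) x * G x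
      ∂(volume.comap Subtype.val) = 0 := by
    rw [← hmom a (b + 1) (by omega), ← integral_subtype_comap hKm]
    congr 1 with x
    simp only [ContinuousMap.mul_apply, ContinuousMap.pow_apply, ContinuousMap.restrict_apply, G,
      mξ, mζ, ContinuousMap.coe_mk]
    ring
  have hL : ContinuousMap.integralMulCLM (volume.comap Subtype.val) (G.restrict K) = 0 :=
    ContinuousLinearMap.eq_zero_of_separatesPoints _ (separatesPoints_adjoin_mξ_mζ hpos)
      fun f hf => Algebra.adjoin_pair_le_ker _
        (fun a b => (ContinuousMap.integralMulCLM_apply _ _ _).trans (hmomK a b)) hf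
  have hG : ∫ σ in K, G σ ^ 2 = 0 := by
    rw [← integral_subtype_comap hKm]
    simpa only [ContinuousMap.integralMulCLM_apply, ContinuousMap.restrict_apply,
      zero_apply, sq] using DFunLike.congr_fun hL (G.restrict K)
  intro σ hσ
  have hGσ : σ.2 ^ 4 * ψ σ = 0 := eqOn_zero_of_setIntegral_sq_eq_zero hKc
    (closure_interior_Icc_prod_Icc hab₁.ne hab₂.ne).symm.subset G.continuous hG hσ
  exact (mul_eq_zero.mp hGσ).resolve_left (pow_pos (hpos σ hσ) 4).ne'
end
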